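/- For every fixed gadget graph H with distinguished vertices c, d, and every graph G, the graph ρ_H(G) obtained by replacing each edge of G with a disjoint copy of H (identifying endpoints with c and d) satisfies: any cycle of ρ_H(G) is either entirely contained in a single copy of H, or its intersection with each copy of H used is a path between the images of c and d in that copy. Consequently, if H is acyclic, then ρ_H(G) contains a cycle if and only if G contains a cycle and H contains a path from c to d. -/

import Mathlib

open SimpleGraph

/-- A vertex cover: a set of vertices meeting every edge. -/
def IsVertexCover {V : Type*} (G : SimpleGraph V) (U : Set V) : Prop :=
  ∀ ⦃u v⦄, G.Adj u v → u ∈ U ∨ v ∈ U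

/-- A feedback vertex set: a set of vertices whose removal leaves an acyclic graph. -/
def IsFVS {V : Type*} (G : SimpleGraph V) (U : Set V) : Prop :=
  (G.induce Uᶜ).IsAcyclic

/-- The vertex type of the edge-gadget image of `G`: the original vertices plus, for each
(oriented) edge of `G`, a fresh copy of the interior of the gadget graph `H`. -/
def EGVert {V W : Type*} [LinearOrder V] (G : SimpleGraph V) (c d : W) : Type _ :=
  V ⊕ ({p : V × V // G.Adj p.1 p.2 ∧ p.1 < p.2} × {w : W // w ≠ c ∧ w ≠ d})

/-- Base adjacency relation for the edge-gadget construction: each edge `(u,v)` of `G`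
(with `u < v`) is replaced by a fresh copy of `H`, identifying `u` with `c` and `v` with `d`. -/
def egBase {V W : Type*} [LinearOrder V] (G : SimpleGraph V) (H : SimpleGraph W) (c d : W)
    (x y : EGVert G c d) : Prop :=
  (∃ e : {p : V × V // G.Adj p.1 p.2 ∧ p.1 < p.2},
      x = Sum.inl e.1.1 ∧ y = Sum.inl e.1.2 ∧ H.Adj c d) ∨
  (∃ (e : {p : V × V // G.Adj p.1 p.2 ∧ p.1 < p.2}) (w : {w : W // w ≠ c ∧ w ≠ d}),
      x = Sum.inl e.1.1 ∧ y = Sum.inr (e, w) ∧ H.Adj c w.1) ∨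
  (∃ (e : {p : V × V // G.Adj p.1 p.2 ∧ p.1 < p.2}) (w : {w : W // w ≠ c ∧ w ≠ d}),
      x = Sum.inl e.1.2 ∧ y = Sum.inr (e, w) ∧ H.Adj d w.1) ∨
  (∃ (e : {p : V × V // G.Adj p.1 p.2 ∧ p.1 < p.2}) (w w' : {w : W // w ≠ c ∧ w ≠ d}),
      x = Sum.inr (e, w) ∧ y = Sum.inr (e, w') ∧ H.Adj w.1 w'.1)

/-- The edge-gadget image of `G`: every edge of `G` is replaced by a disjoint copy of `H`,
identifying the endpoints with the distinguished vertices `c` and `d` of `H`. -/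
def edgeGadget {V W : Type*} [LinearOrder V] (G : SimpleGraph V) (H : SimpleGraph W)
    (c d : W) : SimpleGraph (EGVert G c d) where
  Adj x y := egBase G H c d x y ∨ egBase G H c d y x
  symm := ⟨fun x y h => h.symm⟩
  loopless := by
    refine ⟨?_⟩
    intro x h
    have : egBase G H c d x x := by rcases h with h | h <;> exact h
    rcases this with ⟨e, h1, h2, _⟩ | ⟨e, w, h1, h2, _⟩ | ⟨e, w, h1, h2, _⟩
      | ⟨e, w, w', h1, h2, hadj⟩
    · rw [h1] at h2
      exact absurd (Sum.inl_injective h2) (ne_of_lt e.2.2)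
    · rw [h1] at h2; exact Sum.inl_ne_inr h2
    · rw [h1] at h2; exact Sum.inl_ne_inr h2
    · rw [h1] at h2
      obtain ⟨-, h⟩ := Prod.mk.injEq _ _ _ _ ▸ Sum.inr_injective h2
      exact H.irrefl (by rwa [h] at hadj)

/-- Membership in the copy of the gadget inserted for the (oriented) edge `e` of `G`:
the two endpoints of `e` together with the interior vertices of that copy. -/
def inCopy {V W : Type*} [LinearOrder V] (G : SimpleGraph V) (c d : W)
    (e : {p : V × V // G.Adj p.1 p.2 ∧ p.1 < p.2}) (x : EGVert G c d) : Prop :=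
  x = Sum.inl e.1.1 ∨ x = Sum.inl e.1.2 ∨ ∃ w : {w : W // w ≠ c ∧ w ≠ d}, x = Sum.inr (e, w)

/-!
Each copy of `H` meets the rest of the edge-gadget image only in the two endpoints of its edge
of `G`. For any vertex set `S` attached to the rest of a graph at two terminals `a ≠ b`, a cycle
that uses an edge inside `S` and a vertex outside `S` passes through both terminals; of its two
`a`–`b` arcs, the one with a vertex outside `S` meets `S` only in `a` and `b`, so the other lies
in `S`. This gives the first part.

If `H` is acyclic, no cycle stays inside one copy, so a cycle of the image crosses some copy: the
arc inside the copy is a `c`–`d` path of `H`, and collapsing every copy onto its edge turns the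
other arc into a walk of `G` between the endpoints of that edge avoiding it, i.e. a cycle of `G`.
Conversely, lifting a cycle of `G` through the copies along a `c`–`d` path of `H` produces a walk
that closes up around the first edge of that path in one copy.
-/

namespace SimpleGraph

variable {α : Type*} {Γ : SimpleGraph α}

theorem not_isAcyclic_iff_exists_adj_reachable :
    ¬ Γ.IsAcyclic ↔ ∃ v w, Γ.Adj v w ∧ (Γ.deleteEdges {s(v, w)}).Reachable v w := by
  simp [isAcyclic_iff_forall_adj_isBridge, isBridge_iff]

theorem Walk.IsCycle.exists_isPath_isPath {v u w : α} {C : Γ.Walk v v} (hC : C.IsCycle)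
    (hu : u ∈ C.support) (hw : w ∈ C.support) (huw : u ≠ w) :
    ∃ (X : Γ.Walk u w) (Y : Γ.Walk w u), X.IsPath ∧ Y.IsPath ∧
      (∀ z, z ∈ C.support ↔ z ∈ X.support ∨ z ∈ Y.support) ∧
      (∀ e, e ∈ C.edges ↔ e ∈ X.edges ∨ e ∈ Y.edges) ∧
      ∀ z ∈ X.support, z ∈ Y.support → z = u ∨ z = w := by
  classical
  have hR : (C.rotate u hu).IsCycle := hC.rotate hu
  have hwR : w ∈ (C.rotate u hu).support := (C.mem_support_rotate_iff u hu).mpr hw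
  have hsplit := (C.rotate u hu).take_spec hwR
  set X := (C.rotate u hu).takeUntil w hwR
  set Y := (C.rotate u hu).dropUntil w hwR
  have hXY : (X.append Y).IsCycle := hsplit ▸ hR
  refine ⟨X, Y, hR.isPath_takeUntil hwR, hXY.isPath_of_append_right (Walk.not_nil_of_ne huw),
    fun z => ?_, fun e => ?_, fun z hzX hzY => ?_⟩
  · rw [← C.mem_support_rotate_iff u hu, ← hsplit, mem_support_append_iff]
  · rw [← (C.rotate_edges u hu).mem_iff, ← hsplit, edges_append, List.mem_append]
  · by_contra! hz
    have hnd := hXY.support_nodup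
    rw [tail_support_append] at hnd
    exact List.disjoint_of_nodup_append hnd ((X.mem_support_iff.mp hzX).resolve_left hz.1)
      ((Y.mem_support_iff.mp hzY).resolve_left hz.2)

theorem Hom.reachable_deleteEdges_of_isPath {β : Type*} {Δ : SimpleGraph β} (f : Γ →g Δ)
    (hf : Function.Injective f) {u w v : α} {h : Γ.Adj u w} {P : Γ.Walk w v}
    (hP : (Walk.cons h P).IsPath) : (Δ.deleteEdges {s(f u, f w)}).Reachable (f w) (f v) := by
  have hu : u ∉ P.support := ((Walk.cons_isPath_iff _ _).mp hP).2
  refine ((P.map f).toDeleteEdges _ fun ed hed hedu => ?_).reachable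
  obtain ⟨ed, hedP, rfl⟩ := List.mem_map.mp ((Walk.edges_map _ _) ▸ hed)
  rw [Set.mem_singleton_iff, ← Sym2.map_mk] at hedu
  exact hu (P.fst_mem_support_of_mem_edges (Sym2.map.injective hf hedu ▸ hedP))

structure IsTwoTerminal (Γ : SimpleGraph α) (S : Set α) (a b : α) : Prop where
  left_mem : a ∈ S
  right_mem : b ∈ S
  eq_or_eq_of_adj : ∀ ⦃x y⦄, Γ.Adj x y → x ∈ S → y ∉ S → x = a ∨ x = b

namespace IsTwoTerminal

variable {S : Set α} {a b x y u v : α}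

theorem symm (hS : Γ.IsTwoTerminal S a b) : Γ.IsTwoTerminal S b a :=
  ⟨hS.right_mem, hS.left_mem, fun _ _ h hx hy => (hS.eq_or_eq_of_adj h hx hy).symm⟩

theorem mem_support_of_mem_of_notMem (hS : Γ.IsTwoTerminal S a b) (p : Γ.Walk x y)
    (hx : x ∈ S) (hy : y ∉ S) : a ∈ p.support ∨ b ∈ p.support := by
  obtain ⟨d, hd, hfst, hsnd⟩ := p.exists_boundary_dart S hx hy
  rcases hS.eq_or_eq_of_adj d.adj hfst hsnd with h | h <;> rw [← h]
  exacts [.inl (p.dart_fst_mem_support_of_mem_darts hd),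
    .inr (p.dart_fst_mem_support_of_mem_darts hd)]

theorem mem_iff_mem_of_notMem_support (hS : Γ.IsTwoTerminal S a b) (p : Γ.Walk x y)
    (ha : a ∉ p.support) (hb : b ∉ p.support) : x ∈ S ↔ y ∈ S := by
  refine ⟨fun hx => ?_, fun hy => ?_⟩ <;> by_contra h
  · exact (hS.mem_support_of_mem_of_notMem p hx h).elim ha hb
  · simpa [ha, hb] using hS.mem_support_of_mem_of_notMem p.reverse hy h

theorem mem_iff_mem_of_isPath (hS : Γ.IsTwoTerminal S a b) {R : Γ.Walk a b} (hR : R.IsPath)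
    (hu : u ∈ R.support) (hv : v ∈ R.support) (hua : u ≠ a) (hub : u ≠ b) (hva : v ≠ a)
    (hvb : v ≠ b) : u ∈ S ↔ v ∈ S := by
  obtain ⟨X, Y, hX, hY, rfl⟩ := hR.mem_support_iff_exists_append.mp hu
  rcases (Walk.mem_support_append_iff X Y).mp hv with hvX | hvY
  · obtain ⟨X₁, X₂, -, -, rfl⟩ := hX.mem_support_iff_exists_append.mp hvX
    refine (hS.mem_iff_mem_of_notMem_support X₂ (fun ha => ?_) (fun hb => ?_)).symm
    · exact hX.ne_of_mem_support_of_append hva.symm X₁.start_mem_support ha rfl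
    · exact hR.ne_of_mem_support_of_append hub.symm
        ((Walk.mem_support_append_iff X₁ X₂).mpr (.inr hb)) Y.end_mem_support rfl
  · obtain ⟨Y₁, Y₂, -, -, rfl⟩ := hY.mem_support_iff_exists_append.mp hvY
    refine hS.mem_iff_mem_of_notMem_support Y₁ (fun ha => ?_) (fun hb => ?_)
    · exact hR.ne_of_mem_support_of_append hua.symm X.start_mem_support
        ((Walk.mem_support_append_iff Y₁ Y₂).mpr (.inl ha)) rfl
    · exact hY.ne_of_mem_support_of_append hvb.symm hb Y₂.end_mem_support rfl

theorem eq_or_eq_of_isPath (hS : Γ.IsTwoTerminal S a b) {R : Γ.Walk a b} (hR : R.IsPath)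
    (hv : v ∈ R.support) (hvS : v ∉ S) (hu : u ∈ R.support) (huS : u ∈ S) :
    u = a ∨ u = b := by
  have hva : v ≠ a := fun h => hvS (h ▸ hS.left_mem)
  have hvb : v ≠ b := fun h => hvS (h ▸ hS.right_mem)
  by_contra! h
  exact hvS ((hS.mem_iff_mem_of_isPath hR hu hv h.1 h.2 hva hvb).mp huS)

theorem notMem_of_mem_edges (hS : Γ.IsTwoTerminal S a b) {R : Γ.Walk a b} (hR : R.IsPath)
    (hv : v ∈ R.support) (hvS : v ∉ S) (he : s(x, y) ∈ R.edges) (hx : x ∈ S) : y ∉ S := by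
  intro hy
  have hxy : x ≠ y := (R.adj_of_mem_edges he).ne
  have hab : s(x, y) = s(a, b) := by
    rcases hS.eq_or_eq_of_isPath hR hv hvS (R.fst_mem_support_of_mem_edges he) hx with rfl | rfl <;>
    rcases hS.eq_or_eq_of_isPath hR hv hvS (R.snd_mem_support_of_mem_edges he) hy with rfl | rfl <;>
    simp_all [Sym2.eq_swap]
  -- an `a`–`b` path through the edge `s(a, b)` is that edge, so it has no vertex outside `S`
  cases R with
  | nil => exact hvS ((by simpa using hv : v = a) ▸ hS.left_mem)
  | cons h R' =>
    obtain rfl : b = _ := by simpa using hR.eq_snd_of_mem_edges (hab ▸ he)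
    obtain rfl := (Walk.isPath_iff_nil.mp hR.of_cons).eq_nil
    rcases (by simpa using hv) with rfl | rfl
    exacts [hvS hS.left_mem, hvS hS.right_mem]

theorem left_mem_support_of_isCycle (hS : Γ.IsTwoTerminal S a b) {C : Γ.Walk v v}
    (hC : C.IsCycle) {s p q : α} (hs : s ∈ C.support) (hsS : s ∉ S) (hpq : s(p, q) ∈ C.edges)
    (hp : p ∈ S) (hq : q ∈ S) : a ∈ C.support := by
  by_contra ha
  -- both arcs of `C` between `u ∈ S` and `s` pass through `b`, and they meet only at `u` and `s`
  have key : ∀ u ∈ C.support, u ∈ S → u = b := by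
    intro u hu huS
    obtain ⟨X, Y, -, -, hsupp, -, hXY⟩ :=
      hC.exists_isPath_isPath hu hs (fun h => hsS (h ▸ huS))
    have haX : a ∉ X.support := fun h => ha ((hsupp a).mpr (.inl h))
    have haY : a ∉ Y.reverse.support := fun h => ha ((hsupp a).mpr (.inr (by simpa using h)))
    have hbX := (hS.mem_support_of_mem_of_notMem X huS hsS).resolve_left haX
    have hbY := (hS.mem_support_of_mem_of_notMem Y.reverse huS hsS).resolve_left haY
    exact ((hXY b hbX (by simpa using hbY)).resolve_right
      (fun h => hsS (h ▸ hS.right_mem))).symm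
  exact (C.adj_of_mem_edges hpq).ne ((key p (C.fst_mem_support_of_mem_edges hpq) hp).trans
    (key q (C.snd_mem_support_of_mem_edges hpq) hq).symm)

theorem mem_support_iff_of_isPath_of_isPath (hS : Γ.IsTwoTerminal S a b) {P Q : Γ.Walk a b}
    (hP : P.IsPath) (hQ : Q.IsPath) {s p q : α} (hs : s ∈ Q.support) (hsS : s ∉ S)
    (hpq : s(p, q) ∈ P.edges ∨ s(p, q) ∈ Q.edges) (hp : p ∈ S) (hq : q ∈ S) (z : α) :
    z ∈ P.support ↔ (z ∈ P.support ∨ z ∈ Q.support) ∧ z ∈ S := by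
  have hPS : ∀ z ∈ P.support, z ∈ S := by
    intro z hz
    by_contra hzS
    rcases hpq with hpq | hpq
    exacts [hS.notMem_of_mem_edges hP hz hzS hpq hp hq,
      hS.notMem_of_mem_edges hQ hs hsS hpq hp hq]
  refine ⟨fun hz => ⟨.inl hz, hPS z hz⟩, ?_⟩
  rintro ⟨hz | hz, hzS⟩
  · exact hz
  · rcases hS.eq_or_eq_of_isPath hQ hs hsS hz hzS with rfl | rfl
    exacts [P.start_mem_support, P.end_mem_support]

theorem exists_isPath_of_isCycle (hS : Γ.IsTwoTerminal S a b) (hab : a ≠ b) {C : Γ.Walk v v}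
    (hC : C.IsCycle) {s p q : α} (hs : s ∈ C.support) (hsS : s ∉ S) (hpq : s(p, q) ∈ C.edges)
    (hp : p ∈ S) (hq : q ∈ S) :
    ∃ P : Γ.Walk a b, P.IsPath ∧ (∀ z, z ∈ P.support ↔ z ∈ C.support ∧ z ∈ S) ∧
      ∃ Q : Γ.Walk a b, ∀ ⦃x y⦄, s(x, y) ∈ Q.edges → x ∈ S → y ∉ S := by
  obtain ⟨X, Y, hX, hY, hsupp, hedges, -⟩ := hC.exists_isPath_isPath
    (hS.left_mem_support_of_isCycle hC hs hsS hpq hp hq)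
    (hS.symm.left_mem_support_of_isCycle hC hs hsS hpq hp hq) hab
  have hY' : Y.reverse.IsPath := hY.reverse
  rcases (hsupp s).mp hs with hsX | hsY
  · have hsuppY := hS.mem_support_iff_of_isPath_of_isPath hY' hX hsX hsS
      (by simpa [or_comm] using (hedges _).mp hpq) hp hq
    exact ⟨Y.reverse, hY', fun z => by simpa [hsupp, or_comm] using hsuppY z, X,
      fun _ _ => hS.notMem_of_mem_edges hX hsX hsS⟩
  · have hsY' : s ∈ Y.reverse.support := by simpa using hsY
    have hsuppX := hS.mem_support_iff_of_isPath_of_isPath hX hY' hsY' hsS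
      (by simpa using (hedges _).mp hpq) hp hq
    exact ⟨X, hX, fun z => by simpa [hsupp] using hsuppX z, Y.reverse,
      fun _ _ => hS.notMem_of_mem_edges hY' hsY' hsS⟩

end IsTwoTerminal

end SimpleGraph

namespace EdgeGadget

variable {V W : Type*} [LinearOrder V] {G : SimpleGraph V} {H : SimpleGraph W} {c d : W}
  {e e' : {p : V × V // G.Adj p.1 p.2 ∧ p.1 < p.2}} {x y : EGVert G c d}

theorem eq_of_sym2_eq (h : s(e.1.1, e.1.2) = s(e'.1.1, e'.1.2)) : e = e' := by
  rcases Sym2.eq_iff.mp h with ⟨h₁, h₂⟩ | ⟨h₁, h₂⟩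
  · exact Subtype.ext (Prod.ext h₁ h₂)
  · exact absurd (e.2.2.trans (h₂ ▸ h₁ ▸ e'.2.2)) (lt_irrefl _)

theorem exists_sym2_eq {u v : V} (h : G.Adj u v) :
    ∃ e : {p : V × V // G.Adj p.1 p.2 ∧ p.1 < p.2}, s(e.1.1, e.1.2) = s(u, v) := by
  rcases h.ne.lt_or_gt with huv | hvu
  exacts [⟨⟨(u, v), h, huv⟩, rfl⟩, ⟨⟨(v, u), h.symm, hvu⟩, Sym2.eq_swap⟩]

@[simp] theorem inCopy_inl {u : V} :
    inCopy G c d e (Sum.inl u) ↔ u ∈ s(e.1.1, e.1.2) := by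
  simp [inCopy, Sym2.mem_iff, EGVert]

@[simp] theorem inCopy_inr {w : {w : W // w ≠ c ∧ w ≠ d}} :
    inCopy G c d e (Sum.inr (e', w)) ↔ e' = e := by
  simp [inCopy, EGVert]

theorem eq_of_inCopy (hxy : x ≠ y) (hx : inCopy G c d e x) (hy : inCopy G c d e y)
    (hx' : inCopy G c d e' x) (hy' : inCopy G c d e' y) : e = e' := by
  rcases x with u | ⟨f, w⟩
  · rcases y with v | ⟨f, w⟩
    · have huv : u ≠ v := fun h => hxy (h ▸ rfl)
      simp only [inCopy_inl] at hx hy hx' hy'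
      exact eq_of_sym2_eq (((Sym2.mem_and_mem_iff huv).mp ⟨hx, hy⟩).trans
        ((Sym2.mem_and_mem_iff huv).mp ⟨hx', hy'⟩).symm)
    · simp only [inCopy_inr] at hy hy'
      exact hy.symm.trans hy'
  · simp only [inCopy_inr] at hx hx'
    exact hx.symm.trans hx'

def toGadget (e : {p : V × V // G.Adj p.1 p.2 ∧ p.1 < p.2}) : EGVert G c d → W :=
  Sum.elim (fun u => if u = e.1.1 then c else d) (fun q => q.2.1)

@[simp] theorem toGadget_left : toGadget e (Sum.inl e.1.1 : EGVert G c d) = c := by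
  simp [toGadget]

@[simp] theorem toGadget_right : toGadget e (Sum.inl e.1.2 : EGVert G c d) = d := by
  simp [toGadget, e.2.2.ne']

theorem exists_inCopy_of_egBase (h : egBase G H c d x y) :
    ∃ e, inCopy G c d e x ∧ inCopy G c d e y ∧ H.Adj (toGadget e x) (toGadget e y) := by
  rcases h with ⟨e, rfl, rfl, h⟩ | ⟨e, w, rfl, rfl, h⟩ | ⟨e, w, rfl, rfl, h⟩ |
    ⟨e, w, w', rfl, rfl, h⟩ <;>
    exact ⟨e, by simp, by simp, by simpa [toGadget, e.2.2.ne'] using h⟩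

theorem exists_inCopy_of_adj (h : (edgeGadget G H c d).Adj x y) :
    ∃ e, inCopy G c d e x ∧ inCopy G c d e y ∧ H.Adj (toGadget e x) (toGadget e y) := by
  rcases h with h | h
  · exact exists_inCopy_of_egBase h
  · obtain ⟨e, hy, hx, h⟩ := exists_inCopy_of_egBase h
    exact ⟨e, hx, hy, h.symm⟩

theorem adj_toGadget (h : (edgeGadget G H c d).Adj x y) (hx : inCopy G c d e x)
    (hy : inCopy G c d e y) : H.Adj (toGadget e x) (toGadget e y) := by
  obtain ⟨e', hx', hy', h'⟩ := exists_inCopy_of_adj h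
  rwa [eq_of_inCopy h.ne hx hy hx' hy']

theorem isTwoTerminal_inCopy (e : {p : V × V // G.Adj p.1 p.2 ∧ p.1 < p.2}) :
    (edgeGadget G H c d).IsTwoTerminal {x | inCopy G c d e x} (Sum.inl e.1.1) (Sum.inl e.1.2) := by
  refine ⟨.inl rfl, .inr (.inl rfl), fun x y h hx hy => ?_⟩
  obtain ⟨e', hx', hy', -⟩ := exists_inCopy_of_adj h
  rcases hx with hx | hx | ⟨w, rfl⟩
  exacts [.inl hx, .inr hx, absurd (inCopy_inr.mp hx' ▸ hy') hy]

def copyHom (e : {p : V × V // G.Adj p.1 p.2 ∧ p.1 < p.2}) :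
    (edgeGadget G H c d).induce {x | inCopy G c d e x} →g H where
  toFun x := toGadget e x.1
  map_rel' {x y} h := adj_toGadget h x.2 y.2

theorem toGadget_injOn (hcd : c ≠ d) :
    Set.InjOn (toGadget e : EGVert G c d → W) {x | inCopy G c d e x} := by
  intro x (hx : inCopy G c d e x) y (hy : inCopy G c d e y) h
  rcases x with u | ⟨f, w⟩ <;> rcases y with v | ⟨f', w'⟩ <;>
    simp only [inCopy_inl, inCopy_inr, Sym2.mem_iff] at hx hy
  · rcases hx with rfl | rfl <;> rcases hy with rfl | rfl <;>
      simp_all [toGadget, e.2.2.ne'] <;> rfl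
  · simp only [toGadget, Sum.elim_inl, Sum.elim_inr] at h
    split_ifs at h
    exacts [(w'.2.1 h.symm).elim, (w'.2.2 h.symm).elim]
  · simp only [toGadget, Sum.elim_inl, Sum.elim_inr] at h
    split_ifs at h
    exacts [(w.2.1 h).elim, (w.2.2 h).elim]
  · subst hx hy
    obtain rfl : w = w' := Subtype.ext h
    rfl

theorem copyHom_injective (hcd : c ≠ d) :
    Function.Injective (copyHom (G := G) (H := H) (c := c) (d := d) e) :=
  fun x y h => Subtype.ext (toGadget_injOn hcd x.2 y.2 h)

theorem not_isCycle_of_forall_inCopy (hcd : c ≠ d) (hH : H.IsAcyclic)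
    {w : (edgeGadget G H c d).Walk x x} (hcopy : ∀ v ∈ w.support, inCopy G c d e v) :
    ¬ w.IsCycle := fun hw =>
  hH.comap (copyHom e) (copyHom_injective hcd) _
    (Walk.IsCycle.of_map (f := (Embedding.induce _).toHom) ((w.map_induce hcopy).symm ▸ hw))

theorem reachable_of_forall_inCopy (w : (edgeGadget G H c d).Walk (Sum.inl e.1.1) (Sum.inl e.1.2))
    (hcopy : ∀ v ∈ w.support, inCopy G c d e v) : H.Reachable c d := by
  simpa [copyHom] using ((w.induce _ hcopy).map (copyHom e)).reachable

def toBase : EGVert G c d → V :=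
  Sum.elim id (fun q => q.1.1.1)

theorem toBase_mem (hx : inCopy G c d e x) : toBase x ∈ s(e.1.1, e.1.2) := by
  rcases x with u | ⟨f, w⟩
  · simpa [toBase] using hx
  · obtain rfl : f = e := inCopy_inr.mp hx
    exact Sym2.mem_mk_left _ _

theorem reachable_toBase_of_inCopy (hne : e' ≠ e) (hx : inCopy G c d e' x)
    (hy : inCopy G c d e' y) :
    (G.deleteEdges {s(e.1.1, e.1.2)}).Reachable (toBase x) (toBase y) := by
  by_cases hxy : toBase x = toBase y
  · rw [hxy]
  have he' := (Sym2.mem_and_mem_iff hxy).mp ⟨toBase_mem hx, toBase_mem hy⟩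
  refine Adj.reachable ((deleteEdges_adj ..).mpr ⟨?_, ?_⟩)
  · rw [← mem_edgeSet, ← he']
    exact e'.2.1
  · rw [← he', Set.mem_singleton_iff]
    exact fun h => hne (eq_of_sym2_eq h)

theorem reachable_toBase (q : (edgeGadget G H c d).Walk x y)
    (hq : ∀ ⦃u v⦄, s(u, v) ∈ q.edges → inCopy G c d e u → ¬ inCopy G c d e v) :
    (G.deleteEdges {s(e.1.1, e.1.2)}).Reachable (toBase x) (toBase y) := by
  induction q with
  | nil => rfl
  | cons h q ih =>
    obtain ⟨e', hx, hy, -⟩ := exists_inCopy_of_adj h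
    have hne : e' ≠ e := by
      rintro rfl
      exact hq (by simp) hx hy
    exact (reachable_toBase_of_inCopy hne hx hy).trans
      (ih fun u v huv => hq (by simp [huv]))

open Classical in
noncomputable def ofGadget (e : {p : V × V // G.Adj p.1 p.2 ∧ p.1 < p.2}) (w : W) :
    EGVert G c d :=
  if hc : w = c then Sum.inl e.1.1
  else if hd : w = d then Sum.inl e.1.2 else Sum.inr (e, ⟨w, hc, hd⟩)

@[simp] theorem ofGadget_left : (ofGadget e c : EGVert G c d) = Sum.inl e.1.1 :=
  dif_pos rfl

theorem ofGadget_right (hcd : c ≠ d) : (ofGadget e d : EGVert G c d) = Sum.inl e.1.2 :=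
  (dif_neg hcd.symm).trans (dif_pos rfl)

theorem ofGadget_cases (w : W) :
    (w = c ∧ (ofGadget e w : EGVert G c d) = Sum.inl e.1.1) ∨
      (w ≠ c ∧ w = d ∧ (ofGadget e w : EGVert G c d) = Sum.inl e.1.2) ∨
      ∃ (hc : w ≠ c) (hd : w ≠ d),
        (ofGadget e w : EGVert G c d) = Sum.inr (e, ⟨w, hc, hd⟩) := by
  by_cases hc : w = c
  · exact .inl ⟨hc, hc ▸ ofGadget_left⟩
  by_cases hd : w = d
  · exact .inr (.inl ⟨hc, hd, (dif_neg hc).trans (dif_pos hd)⟩)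
  exact .inr (.inr ⟨hc, hd, (dif_neg hc).trans (dif_neg hd)⟩)

theorem inCopy_ofGadget (w : W) : inCopy G c d e (ofGadget e w) := by
  rcases ofGadget_cases (e := e) (c := c) (d := d) w with
    ⟨-, h⟩ | ⟨-, -, h⟩ | ⟨_, _, h⟩ <;>
    rw [h] <;> simp

theorem toGadget_ofGadget (w : W) : toGadget e (ofGadget e w : EGVert G c d) = w := by
  rcases ofGadget_cases (e := e) (c := c) (d := d) w with
    ⟨rfl, h⟩ | ⟨-, rfl, h⟩ | ⟨_, _, h⟩ <;>
    rw [h] <;> simp [toGadget, e.2.2.ne']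

theorem ofGadget_adj {a b : W} (h : H.Adj a b) :
    (edgeGadget G H c d).Adj (ofGadget e a) (ofGadget e b) := by
  rcases ofGadget_cases (e := e) (c := c) (d := d) a with
    ⟨ha', ha⟩ | ⟨-, ha', ha⟩ | ⟨_, _, ha⟩ <;>
  rcases ofGadget_cases (e := e) (c := c) (d := d) b with
    ⟨hb', hb⟩ | ⟨-, hb', hb⟩ | ⟨_, _, hb⟩ <;>
  rw [ha, hb] <;> (try subst a) <;> (try subst b)
  all_goals first
    | exact (h.ne rfl).elim
    | exact .inl (.inl ⟨e, rfl, rfl, h⟩)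
    | exact .inr (.inl ⟨e, rfl, rfl, h.symm⟩)
    | exact .inl (.inr (.inl ⟨e, _, rfl, rfl, h⟩))
    | exact .inr (.inr (.inl ⟨e, _, rfl, rfl, h.symm⟩))
    | exact .inl (.inr (.inr (.inl ⟨e, _, rfl, rfl, h⟩)))
    | exact .inr (.inr (.inr (.inl ⟨e, _, rfl, rfl, h.symm⟩)))
    | exact .inl (.inr (.inr (.inr ⟨e, _, _, rfl, rfl, h⟩)))

noncomputable def gadgetHom (e : {p : V × V // G.Adj p.1 p.2 ∧ p.1 < p.2}) :
    H →g edgeGadget G H c d where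
  toFun := ofGadget e
  map_rel' := ofGadget_adj

theorem gadgetHom_injective : Function.Injective (gadgetHom e : H →g edgeGadget G H c d) :=
  Function.LeftInverse.injective (g := toGadget e) toGadget_ofGadget

theorem reachable_inl_of_ne (hcd : c ≠ d) (hH : H.Reachable c d) (hne : e' ≠ e) (hxy : x ≠ y)
    (hx : inCopy G c d e x) (hy : inCopy G c d e y) :
    ((edgeGadget G H c d).deleteEdges {s(x, y)}).Reachable (Sum.inl e'.1.1) (Sum.inl e'.1.2) := by
  obtain ⟨p⟩ := hH
  have hp : ∀ ed ∈ (p.map (gadgetHom e')).edges, ed ∉ ({s(x, y)} : Set _) := by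
    intro ed hed hedxy
    obtain ⟨ed, -, rfl⟩ := List.mem_map.mp ((Walk.edges_map _ _) ▸ hed)
    induction ed using Sym2.ind with | h a b =>
    have hcopy : ∀ z ∈ s(x, y), inCopy G c d e' z := by
      rw [← Set.mem_singleton_iff.mp hedxy, Sym2.map_mk]
      rintro z hz
      rcases Sym2.mem_iff.mp hz with rfl | rfl <;> exact inCopy_ofGadget _
    exact hne (eq_of_inCopy hxy (hcopy x (Sym2.mem_mk_left x y)) (hcopy y (Sym2.mem_mk_right x y))
      hx hy)
  simpa [gadgetHom, ofGadget_right hcd] using ((p.map (gadgetHom e')).toDeleteEdges _ hp).reachable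

theorem reachable_inl_of_reachable (hcd : c ≠ d) (hH : H.Reachable c d) (hxy : x ≠ y)
    (hx : inCopy G c d e x) (hy : inCopy G c d e y) {u v : V}
    (h : (G.deleteEdges {s(e.1.1, e.1.2)}).Reachable u v) :
    ((edgeGadget G H c d).deleteEdges {s(x, y)}).Reachable (Sum.inl u) (Sum.inl v) := by
  obtain ⟨p⟩ := h
  induction p with
  | nil => rfl
  | cons h p ih =>
    obtain ⟨hadj, hne⟩ := (deleteEdges_adj ..).mp h
    obtain ⟨e', he'⟩ := exists_sym2_eq hadj
    have he'e : e' ≠ e := by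
      rintro rfl
      exact hne he'.symm
    refine Reachable.trans ?_ ih
    rcases Sym2.eq_iff.mp he' with ⟨h₁, h₂⟩ | ⟨h₁, h₂⟩ <;> rw [← h₁, ← h₂]
    exacts [reachable_inl_of_ne hcd hH he'e hxy hx hy,
      (reachable_inl_of_ne hcd hH he'e hxy hx hy).symm]

theorem isCycle_inCopy_or {w : (edgeGadget G H c d).Walk x x} (hw : w.IsCycle) :
    (∃ e, ∀ v ∈ w.support, inCopy G c d e v) ∨
    (∀ e, (∃ ed ∈ w.edges, ∃ p q : EGVert G c d,
              ed = s(p, q) ∧ inCopy G c d e p ∧ inCopy G c d e q) →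
      ∃ p : (edgeGadget G H c d).Walk (Sum.inl e.1.1) (Sum.inl e.1.2),
        p.IsPath ∧ ∀ v, v ∈ p.support ↔ (v ∈ w.support ∧ inCopy G c d e v)) := by
  by_cases hone : ∃ e, ∀ v ∈ w.support, inCopy G c d e v
  · exact .inl hone
  refine .inr fun e ⟨ed, hed, p, q, hpq, hp, hq⟩ => ?_
  obtain ⟨s, hs, hsS⟩ : ∃ s ∈ w.support, ¬ inCopy G c d e s := by
    by_contra! h
    exact hone ⟨e, h⟩
  obtain ⟨P, hP, hPsupp, -⟩ := (isTwoTerminal_inCopy e).exists_isPath_of_isCycle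
    (fun h => e.2.2.ne (Sum.inl_injective h)) hw hs hsS (hpq ▸ hed) hp hq
  exact ⟨P, hP, hPsupp⟩

theorem not_isAcyclic_and_reachable (hcd : c ≠ d) (hH : H.IsAcyclic)
    (hρ : ¬ (edgeGadget G H c d).IsAcyclic) : ¬ G.IsAcyclic ∧ H.Reachable c d := by
  obtain ⟨x, w, hw⟩ :
      ∃ (x : EGVert G c d) (w : (edgeGadget G H c d).Walk x x), w.IsCycle := by
    simpa [IsAcyclic] using hρ
  cases w with
  | nil => exact absurd hw Walk.not_isCycle_nil
  | cons h t =>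
    obtain ⟨e, hx, hy, -⟩ := exists_inCopy_of_adj h
    obtain ⟨s, hs, hsS⟩ : ∃ s ∈ (Walk.cons h t).support, ¬ inCopy G c d e s := by
      by_contra! hall
      exact not_isCycle_of_forall_inCopy hcd hH hall hw
    obtain ⟨P, -, hPsupp, Q, hQ⟩ := (isTwoTerminal_inCopy e).exists_isPath_of_isCycle
      (fun h => e.2.2.ne (Sum.inl_injective h)) hw hs hsS (by simp) hx hy
    refine ⟨not_isAcyclic_iff_exists_adj_reachable.mpr ⟨_, _, e.2.1, ?_⟩,
      reachable_of_forall_inCopy P fun v hv => ((hPsupp v).mp hv).2⟩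
    exact reachable_toBase Q hQ

theorem not_isAcyclic_edgeGadget (hcd : c ≠ d) (hG : ¬ G.IsAcyclic) (hH : H.Reachable c d) :
    ¬ (edgeGadget G H c d).IsAcyclic := by
  obtain ⟨u, v, huv, hreach⟩ := not_isAcyclic_iff_exists_adj_reachable.mp hG
  obtain ⟨e, he⟩ := exists_sym2_eq huv
  have hreach' : (G.deleteEdges {s(e.1.1, e.1.2)}).Reachable e.1.1 e.1.2 := by
    rcases Sym2.eq_iff.mp he with ⟨h₁, h₂⟩ | ⟨h₁, h₂⟩ <;> rw [he, h₁, h₂]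
    exacts [hreach, hreach.symm]
  obtain ⟨P, hP⟩ := hH.exists_isPath
  cases P with
  | nil => exact absurd rfl hcd
  | @cons _ w _ hcw P =>
    have hadj := (gadgetHom (c := c) (d := d) e).map_adj hcw
    refine not_isAcyclic_iff_exists_adj_reachable.mpr ⟨_, _, hadj, ?_⟩
    have hcopy := reachable_inl_of_reachable hcd hH hadj.ne (inCopy_ofGadget c) (inCopy_ofGadget w)
      hreach'
    rw [← ofGadget_left, ← ofGadget_right hcd] at hcopy
    exact hcopy.trans ((gadgetHom e).reachable_deleteEdges_of_isPath gadgetHom_injective hP).symm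

end EdgeGadget

theorem stmt_16 {V W : Type*} [LinearOrder V] (G : SimpleGraph V) (H : SimpleGraph W)
    (c d : W) (hcd : c ≠ d) :
    -- every cycle of the edge-gadget image is contained in a single copy of H, or meets
    -- each copy it uses in a path between the images of c and d in that copy
    (∀ (x : EGVert G c d) (w : (edgeGadget G H c d).Walk x x), w.IsCycle →
      (∃ e, ∀ v ∈ w.support, inCopy G c d e v) ∨
      (∀ e, (∃ ed ∈ w.edges, ∃ p q : EGVert G c d,
                ed = s(p, q) ∧ inCopy G c d e p ∧ inCopy G c d e q) →
        ∃ p : (edgeGadget G H c d).Walk (Sum.inl e.1.1) (Sum.inl e.1.2),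
          p.IsPath ∧ ∀ v, v ∈ p.support ↔ (v ∈ w.support ∧ inCopy G c d e v))) ∧
    -- consequently, if H is acyclic, the image has a cycle iff G has a cycle and
    -- H has a path from c to d
    (H.IsAcyclic →
      (¬ (edgeGadget G H c d).IsAcyclic ↔ (¬ G.IsAcyclic ∧ H.Reachable c d))) := by
  refine ⟨fun _ _ hw => EdgeGadget.isCycle_inCopy_or hw, fun hH => ⟨?_, ?_⟩⟩
  · exact EdgeGadget.not_isAcyclic_and_reachable hcd hH
  · rintro ⟨hG, hr⟩
    exact EdgeGadget.not_isAcyclic_edgeGadget hcd hG hr
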